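/- arXiv:2202.09187 — 2 statements merged into one kernel-verified Lean document; each statement's English description precedes it below -/
import Mathlib

section
/- Let n ≥ 1. For all A, B ∈ O^±(n,n,ℤ), the integer matrix H_{A,B} := Bᵀ·(B_A)_low·B − (Bᵀ·B_A·B)_low is symmetric, i.e. H_{A,B} = H_{A,B}ᵀ. -/
open Matrix

/-- Square integer matrices of size `2n`. -/
abbrev Mat (n : ℕ) := Matrix (Fin (n + n)) (Fin (n + n)) ℤ

/-- The `2n × 2n` block matrix `[[A, B], [C, D]]`. -/
def fromB {n : ℕ} (A B C D : Matrix (Fin n) (Fin n) ℤ) : Mat n :=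
  Matrix.reindex finSumFinEquiv finSumFinEquiv (Matrix.fromBlocks A B C D)

/-- The block matrix `I = [[0, Eₙ], [Eₙ, 0]]`. -/
def Imat (n : ℕ) : Mat n := fromB 0 1 1 0

/-- Membership in the integral split pseudo-orthogonal group `O^±(n,n,ℤ)`:
`Aᵀ I A = I` or `Aᵀ I A = -I`. -/
def IsOpm (n : ℕ) (A : Mat n) : Prop :=
  Aᵀ * Imat n * A = Imat n ∨ Aᵀ * Imat n * A = -Imat n

/-- The block matrix `J = [[0, 0], [Eₙ, 0]]`. -/
def Jmat (n : ℕ) : Mat n := fromB 0 0 1 0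

/-- The sign `iso(A) ∈ {1, -1}` with `Aᵀ I A = iso(A) • I` (for `A ∈ O^±(n,n,ℤ)`). -/
noncomputable def iso (n : ℕ) (A : Mat n) : ℤ :=
  if Aᵀ * Imat n * A = Imat n then 1 else -1

/-- For a (skew-symmetric) integer matrix `M`, its strictly lower triangular part
`M_low`, with `(M_low)ᵢⱼ = Mᵢⱼ` for `i > j` and `0` otherwise. -/
def lowm {N : ℕ} (M : Matrix (Fin N) (Fin N) ℤ) : Matrix (Fin N) (Fin N) ℤ :=
  Matrix.of fun i j => if j < i then M i j else 0

/-- The diagonal of a matrix, as a vector `M^{diag}`. -/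
def diagv {N : ℕ} (M : Matrix (Fin N) (Fin N) ℤ) : Fin N → ℤ := fun i => M i i

/-- The skew-symmetric matrix `B_A := iso(A)·J − Aᵀ J A`. -/
noncomputable def Bmat (n : ℕ) (A : Mat n) : Mat n := iso n A • Jmat n - Aᵀ * Jmat n * A

/-!
`B_A` is skew-symmetric, and for a skew-symmetric `M` the transpose of `M_low` is `M_low - M`.
Transposing `H_{A,B}` therefore produces the two correction terms `-Bᵀ M B` and `+Bᵀ M B`
(the latter because `Bᵀ M B` is again skew-symmetric), which cancel.
-/

lemma transpose_lowm_of_transpose_eq_neg {N : ℕ} {M : Matrix (Fin N) (Fin N) ℤ}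
    (hM : Mᵀ = -M) : (lowm M)ᵀ = lowm M - M := by
  ext i j
  have hji : M j i = -M i j := by simpa using congr_fun₂ hM i j
  simp only [Matrix.sub_apply, transpose_apply, lowm, of_apply]
  rcases lt_trichotomy i j with hij | rfl | hji'
  · simp [hij, not_lt.mpr hij.le, hji]
  · have hii : M i i = 0 := by omega
    simp [hii]
  · simp [hji', not_lt.mpr hji'.le]

lemma transpose_conj_eq_neg {N : ℕ} {M : Matrix (Fin N) (Fin N) ℤ} (hM : Mᵀ = -M)
    (B : Matrix (Fin N) (Fin N) ℤ) : (Bᵀ * M * B)ᵀ = -(Bᵀ * M * B) := by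
  rw [transpose_mul, transpose_mul, transpose_transpose, hM, Matrix.neg_mul, Matrix.mul_neg,
    Matrix.mul_assoc]

lemma isSymm_conj_lowm_sub_lowm_conj {N : ℕ} {M : Matrix (Fin N) (Fin N) ℤ} (hM : Mᵀ = -M)
    (B : Matrix (Fin N) (Fin N) ℤ) : (Bᵀ * lowm M * B - lowm (Bᵀ * M * B)).IsSymm := by
  rw [IsSymm, transpose_sub, transpose_mul, transpose_mul, transpose_transpose,
    transpose_lowm_of_transpose_eq_neg hM,
    transpose_lowm_of_transpose_eq_neg (transpose_conj_eq_neg hM B),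
    Matrix.sub_mul, Matrix.mul_sub, ← Matrix.mul_assoc, ← Matrix.mul_assoc]
  abel

lemma Jmat_add_transpose (n : ℕ) : Jmat n + (Jmat n)ᵀ = Imat n := by
  simp only [Jmat, Imat, fromB, reindex_apply, transpose_submatrix, fromBlocks_transpose]
  ext i j
  cases h1 : finSumFinEquiv.symm i <;> cases h2 : finSumFinEquiv.symm j <;>
    simp [submatrix_apply, h1, h2, one_apply]

lemma transpose_mul_Imat_mul_of_isOpm {n : ℕ} {A : Mat n} (hA : IsOpm n A) :
    Aᵀ * Imat n * A = iso n A • Imat n := by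
  unfold iso
  split_ifs with h
  · rw [h, one_smul]
  · rw [hA.resolve_left h, neg_one_smul]

lemma Bmat_transpose {n : ℕ} {A : Mat n} (hA : IsOpm n A) : (Bmat n A)ᵀ = -Bmat n A := by
  have hJ : (Jmat n)ᵀ = Imat n - Jmat n := by rw [← Jmat_add_transpose n]; abel
  rw [Bmat, transpose_sub, transpose_smul, transpose_mul, transpose_mul, transpose_transpose, hJ,
    smul_sub, Matrix.sub_mul, Matrix.mul_sub, ← Matrix.mul_assoc, ← Matrix.mul_assoc,
    transpose_mul_Imat_mul_of_isOpm hA]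
  abel

theorem statement10_general (n : ℕ) (A B : Mat n)
    (hA : IsOpm n A) :
    (Bᵀ * lowm (Bmat n A) * B - lowm (Bᵀ * Bmat n A * B))ᵀ
      = Bᵀ * lowm (Bmat n A) * B - lowm (Bᵀ * Bmat n A * B) :=
  isSymm_conj_lowm_sub_lowm_conj (Bmat_transpose hA) B

/-- For `A, B ∈ O^±(n,n,ℤ)`, the integer matrix
`H_{A,B} := Bᵀ·(B_A)_low·B − (Bᵀ·B_A·B)_low` is symmetric. -/
theorem statement10 (n : ℕ) (hn : 1 ≤ n) (A B : Mat n)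
    (hA : IsOpm n A) (hB : IsOpm n B) :
    (Bᵀ * lowm (Bmat n A) * B - lowm (Bᵀ * Bmat n A * B))ᵀ
      = Bᵀ * lowm (Bmat n A) * B - lowm (Bᵀ * Bmat n A * B) :=
  statement10_general n A B hA
end

section
/- For n = 1, the 3-cocycle m vanishes identically: for all A, B, C ∈ O^±(1,1,ℤ), the vector m_{A,B,C} ∈ ℝ² equals 0. -/
open Matrix

/-- The integer vector `-2·m_{A,B,C}`. -/
noncomputable def mint (n : ℕ) (A B C : Mat n) : Fin (n + n) → ℤ :=
  ((A⁻¹)ᵀ * (B⁻¹)ᵀ * (C⁻¹)ᵀ).mulVec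
    (Cᵀ.mulVec (diagv (Bᵀ * lowm (Bmat n A) * B))
      + diagv (Cᵀ * lowm (Bmat n (A * B)) * C)
      - iso n A • diagv (Cᵀ * lowm (Bmat n B) * C)
      - diagv (Cᵀ * Bᵀ * lowm (Bmat n A) * B * C))

/-- The 3-cocycle
`m_{A,B,C} := −(1/2)·(A⁻¹)ᵀ(B⁻¹)ᵀ(C⁻¹)ᵀ·( Cᵀ·(Bᵀ(B_A)_low B)^{diag} + (Cᵀ(B_{AB})_low C)^{diag}`
`− iso(A)·(Cᵀ(B_B)_low C)^{diag} − (CᵀBᵀ(B_A)_low B C)^{diag} )` as a vector in `ℝ^{2n}`. -/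
noncomputable def mvec (n : ℕ) (A B C : Mat n) : Fin (n + n) → ℝ :=
  fun i => -(1 / 2 : ℝ) * (mint n A B C i : ℝ)

/- For `n = 1` every strictly lower triangular matrix is a multiple of `J`, so each of the four
diagonal vectors in `m_{A,B,C}` is a multiple of the diagonal of `Mᵀ J M` for some
`M ∈ O^±(1,1,ℤ)`. That diagonal vanishes in every rank: since `I = J + Jᵀ`, it is half the
diagonal of `Mᵀ I M = ±I`, which is zero. -/

theorem IsOpm.mul {n : ℕ} {M N : Mat n} (hM : IsOpm n M) (hN : IsOpm n N) :
    IsOpm n (M * N) := by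
  have conj : (M * N)ᵀ * Imat n * (M * N) = Nᵀ * (Mᵀ * Imat n * M) * N := by
    simp only [transpose_mul, Matrix.mul_assoc]
  rw [IsOpm, conj]
  rcases hM with hM | hM <;> rcases hN with hN | hN <;> simp [hM, hN]

theorem Imat_eq_Jmat_add_transpose (n : ℕ) : Imat n = Jmat n + (Jmat n)ᵀ := by
  have hblocks : (fromBlocks 0 1 1 0 : Matrix (Fin n ⊕ Fin n) (Fin n ⊕ Fin n) ℤ)
      = fromBlocks 0 0 1 0 + (fromBlocks 0 0 1 0)ᵀ := by
    simp [fromBlocks_transpose, fromBlocks_add]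
  rw [Imat, Jmat, fromB, fromB, hblocks, transpose_reindex]
  rfl

theorem diag_Imat (n : ℕ) : (Imat n).diag = 0 := by
  ext i
  rcases h : finSumFinEquiv.symm i with k | k <;> simp [Imat, fromB, h]

theorem IsOpm.diag_transpose_mul_Jmat_mul {n : ℕ} {M : Mat n} (hM : IsOpm n M) :
    (Mᵀ * Jmat n * M).diag = 0 := by
  have htwice : (Mᵀ * Imat n * M).diag = 2 • (Mᵀ * Jmat n * M).diag := by
    rw [Imat_eq_Jmat_add_transpose, Matrix.mul_add, Matrix.add_mul, diag_add,
      ← diag_transpose (Mᵀ * (Jmat n)ᵀ * M)]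
    simp only [transpose_mul, transpose_transpose, Matrix.mul_assoc, two_smul]
  have hzero : (Mᵀ * Imat n * M).diag = 0 := by
    rcases hM with hM | hM <;> simp [hM, diag_Imat]
  ext i
  simpa using congrFun (htwice.symm.trans hzero) i

theorem lowm_eq_smul_Jmat_one (N : Mat 1) : lowm N = N 1 0 • Jmat 1 := by
  have hJ : Jmat 1 = !![0, 0; 1, 0] := by decide
  ext i j
  fin_cases i <;> fin_cases j <;> simp [lowm, hJ]

theorem IsOpm.diagv_transpose_mul_lowm_mul {M : Mat 1} (hM : IsOpm 1 M) (N : Mat 1) :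
    diagv (Mᵀ * lowm N * M) = 0 := by
  rw [lowm_eq_smul_Jmat_one, Matrix.mul_smul, Matrix.smul_mul]
  change N 1 0 • (Mᵀ * Jmat 1 * M).diag = 0
  rw [hM.diag_transpose_mul_Jmat_mul, smul_zero]

theorem statement12_general (A B C : Mat 1) (hB : IsOpm 1 B) (hC : IsOpm 1 C) :
    mvec 1 A B C = 0 := by
  have hBC : Cᵀ * Bᵀ * lowm (Bmat 1 A) * B * C = (B * C)ᵀ * lowm (Bmat 1 A) * (B * C) := by
    simp only [transpose_mul, Matrix.mul_assoc]
  have hmint : mint 1 A B C = 0 := by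
    rw [mint, hBC, hB.diagv_transpose_mul_lowm_mul, hC.diagv_transpose_mul_lowm_mul,
      hC.diagv_transpose_mul_lowm_mul, (hB.mul hC).diagv_transpose_mul_lowm_mul]
    simp
  funext i
  simp [mvec, hmint]

/-- For `n = 1`, the 3-cocycle `m` vanishes identically:
`m_{A,B,C} = 0 ∈ ℝ²` for all `A, B, C ∈ O^±(1,1,ℤ)`. -/
theorem statement12 (A B C : Mat 1) (hA : IsOpm 1 A) (hB : IsOpm 1 B) (hC : IsOpm 1 C) :
    mvec 1 A B C = 0 :=
  statement12_general A B C hB hC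
end
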